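/- arXiv:1408.6039 — 9 statements merged into one kernel-verified Lean document; each statement's English description precedes it below -/
import Mathlib

section
/- Fix reals P ≥ 0 and 0 < N_1 ≤ N_3, and define g(α) = C((1−α)P/(αP+N_1)) − C((1−α)P/(αP+N_3)) for α ∈ [0,1]. Then g is nonincreasing on [0,1], g(0) = C(P/N_1) − C(P/N_3), and g(1) = 0. -/
/-- `C q = (1/2) · log(1+q)` (natural logarithm). -/
noncomputable def C (q : ℝ) : ℝ := (1 / 2) * Real.log (1 + q)

/-!
Writing `A = P + N` and `B = αP + N`, the argument of `C` is `(A - B) / B`, so `C` of it is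
`½ log (A / B)`. Hence the gap rearranges to `C ((N₃ - N₁) / (αP + N₁)) - C ((N₃ - N₁) / (P + N₁))`,
whose first term decreases in `α` because `C` is monotone and `αP + N₁` grows.
-/

open Real Set

theorem C_sub_div_self {x y : ℝ} (hy : y ≠ 0) : C ((x - y) / y) = 1 / 2 * log (x / y) := by
  rw [C, sub_div, div_self hy, add_sub_cancel]

theorem C_monotoneOn : MonotoneOn C (Ioi (-1)) := by
  intro x (hx : -1 < x) y _ hxy
  have hx₁ : 0 < 1 + x := by linarith
  unfold C
  gcongr

theorem rate_gap_eq {P N₁ N₃ α : ℝ} (hP : 0 ≤ P) (hN₁ : 0 < N₁) (hN₃ : 0 < N₃) (hα : 0 ≤ α) :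
    C ((1 - α) * P / (α * P + N₁)) - C ((1 - α) * P / (α * P + N₃)) =
      C ((N₃ - N₁) / (α * P + N₁)) - C ((N₃ - N₁) / (P + N₁)) := by
  have hB₁ : 0 < α * P + N₁ := by positivity
  have hB₃ : 0 < α * P + N₃ := by positivity
  have hA₁ : 0 < P + N₁ := by positivity
  have hA₃ : 0 < P + N₃ := by positivity
  rw [show (1 - α) * P / (α * P + N₁) = (P + N₁ - (α * P + N₁)) / (α * P + N₁) by ring,
    show (1 - α) * P / (α * P + N₃) = (P + N₃ - (α * P + N₃)) / (α * P + N₃) by ring,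
    show (N₃ - N₁) / (α * P + N₁) = (α * P + N₃ - (α * P + N₁)) / (α * P + N₁) by ring,
    show (N₃ - N₁) / (P + N₁) = (P + N₃ - (P + N₁)) / (P + N₁) by ring,
    C_sub_div_self hB₁.ne', C_sub_div_self hB₃.ne', C_sub_div_self hB₁.ne',
    C_sub_div_self hA₁.ne', log_div hA₁.ne' hB₁.ne', log_div hA₃.ne' hB₃.ne',
    log_div hB₃.ne' hB₁.ne', log_div hA₃.ne' hA₁.ne']
  ring

theorem rate_gap_antitoneOn {P N₁ N₃ : ℝ} (hP : 0 ≤ P) (hN₁ : 0 < N₁) (hN₁₃ : N₁ ≤ N₃) :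
    AntitoneOn (fun α : ℝ => C ((1 - α) * P / (α * P + N₁)) - C ((1 - α) * P / (α * P + N₃)))
      (Ici 0) := by
  have hN₃ : 0 < N₃ := hN₁.trans_le hN₁₃
  rintro a (ha : 0 ≤ a) b (hb : 0 ≤ b) hab
  simp only [rate_gap_eq hP hN₁ hN₃ ha, rate_gap_eq hP hN₁ hN₃ hb, sub_le_sub_iff_right]
  have hd : 0 ≤ N₃ - N₁ := sub_nonneg.mpr hN₁₃
  have hmem : ∀ x : ℝ, 0 ≤ x → (N₃ - N₁) / (x * P + N₁) ∈ Ioi (-1) := fun x hx =>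
    mem_Ioi.mpr (by linarith [show 0 ≤ (N₃ - N₁) / (x * P + N₁) by positivity])
  exact C_monotoneOn (hmem b hb) (hmem a ha)
    (div_le_div_of_nonneg_left hd (by positivity) (by gcongr))

/-- The rate-gap function `g(α) = C((1−α)P/(αP+N₁)) − C((1−α)P/(αP+N₃))` is
nonincreasing on `[0,1]`, with `g(0) = C(P/N₁) − C(P/N₃)` and `g(1) = 0`. -/
theorem rate_gap_antitone (P N₁ N₃ : ℝ) (hP : 0 ≤ P) (hN1 : 0 < N₁) (hN13 : N₁ ≤ N₃) :
    AntitoneOn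
      (fun α : ℝ => C ((1 - α) * P / (α * P + N₁)) - C ((1 - α) * P / (α * P + N₃)))
      (Set.Icc 0 1) ∧
    C ((1 - (0:ℝ)) * P / ((0:ℝ) * P + N₁)) - C ((1 - (0:ℝ)) * P / ((0:ℝ) * P + N₃))
      = C (P / N₁) - C (P / N₃) ∧
    C ((1 - (1:ℝ)) * P / ((1:ℝ) * P + N₁)) - C ((1 - (1:ℝ)) * P / ((1:ℝ) * P + N₃))
      = 0 :=
  ⟨(rate_gap_antitoneOn hP hN1 hN13).mono Icc_subset_Ici_self, by norm_num, by norm_num⟩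
end

section
/- For all reals P > 0, 0 < N_1 < N_3, and any R_1 with 0 < R_1 < C(P/N_1) − C(P/N_3), there exists a unique α* ∈ (0,1) such that R_1 = C((1−α*)P/(α*P+N_1)) − C((1−α*)P/(α*P+N_3)). -/
open Real Set

lemma C_sub_mul_div_mul_add {P N α : ℝ} (hα : α * P + N ≠ 0) (hP : P + N ≠ 0) :
    C ((1 - α) * P / (α * P + N)) = (log (P + N) - log (α * P + N)) / 2 := by
  have h : 1 + (1 - α) * P / (α * P + N) = (P + N) / (α * P + N) := by
    field_simp
    ring
  rw [C, h, log_div hP hα]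
  ring

lemma strictAntiOn_log_mul_add_sub_log_mul_add {P a b : ℝ} (hP : 0 < P) (ha : 0 < a)
    (hab : a < b) : StrictAntiOn (fun α => log (α * P + b) - log (α * P + a)) (Ici 0) := by
  intro x hx y hy hxy
  have hx0 : (0 : ℝ) ≤ x := hx
  have hy0 : (0 : ℝ) ≤ y := hy
  have hb : 0 < b := ha.trans hab
  have hxa : 0 < x * P + a := by positivity
  have hya : 0 < y * P + a := by positivity
  -- `(y P + b)(x P + a) - (x P + b)(y P + a) = (a - b)(y - x) P < 0`
  have hprod : (y * P + b) * (x * P + a) < (x * P + b) * (y * P + a) := by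
    nlinarith [mul_pos (mul_pos hP (sub_pos.mpr hxy)) (sub_pos.mpr hab)]
  have := log_lt_log (by positivity) hprod
  rw [log_mul (by positivity) hxa.ne', log_mul (by positivity) hya.ne'] at this
  simp only
  linarith

lemma continuousOn_log_mul_add_sub_log_mul_add {P a b : ℝ} (hP : 0 ≤ P) (ha : 0 < a)
    (hb : 0 < b) : ContinuousOn (fun α => log (α * P + b) - log (α * P + a)) (Ici 0) := by
  refine ContinuousOn.sub ?_ ?_ <;>
    refine ContinuousOn.log (by fun_prop) fun α hα => ?_ <;>
    · have : (0 : ℝ) ≤ α := hα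
      positivity

lemma existsUnique_mem_Ioo_eq_of_strictAntiOn {f : ℝ → ℝ} {a b y : ℝ} (hab : a ≤ b)
    (hf : ContinuousOn f (Icc a b)) (hanti : StrictAntiOn f (Icc a b))
    (hy : y ∈ Ioo (f b) (f a)) : ∃! x, x ∈ Ioo a b ∧ y = f x := by
  obtain ⟨x, hx, rfl⟩ := intermediate_value_Ioo' hab hf hy
  refine ⟨x, ⟨hx, rfl⟩, fun x' ⟨hx', hfx'⟩ => ?_⟩
  exact hanti.injOn (Ioo_subset_Icc_self hx') (Ioo_subset_Icc_self hx) hfx'.symm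

/-- For `P > 0`, `0 < N₁ < N₃` and `0 < R₁ < C(P/N₁) − C(P/N₃)`, there is a unique
`α* ∈ (0,1)` with `R₁ = C((1−α*)P/(α*P+N₁)) − C((1−α*)P/(α*P+N₃))`. -/
theorem exists_unique_alpha_star (P N₁ N₃ R₁ : ℝ) (hP : 0 < P) (hN1 : 0 < N₁)
    (hN13 : N₁ < N₃) (hR0 : 0 < R₁) (hR1 : R₁ < C (P / N₁) - C (P / N₃)) :
    ∃! α : ℝ, α ∈ Set.Ioo (0:ℝ) 1 ∧
      R₁ = C ((1 - α) * P / (α * P + N₁)) - C ((1 - α) * P / (α * P + N₃)) := by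
  have hN3 : 0 < N₃ := hN1.trans hN13
  set g : ℝ → ℝ := fun α =>
    (log (P + N₁) - log (P + N₃) + (log (α * P + N₃) - log (α * P + N₁))) / 2
  have hC : ∀ α : ℝ, 0 ≤ α →
      C ((1 - α) * P / (α * P + N₁)) - C ((1 - α) * P / (α * P + N₃)) = g α := fun α hα => by
    rw [C_sub_mul_div_mul_add (by positivity) (by positivity),
      C_sub_mul_div_mul_add (by positivity) (by positivity)]
    ring
  have hcont : ContinuousOn g (Icc 0 1) :=
    (continuousOn_const.add ((continuousOn_log_mul_add_sub_log_mul_add hP.le hN1 hN3).mono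
      Icc_subset_Ici_self)).div_const 2
  have hanti : StrictAntiOn g (Icc 0 1) := fun x hx y hy hxy => by
    have := strictAntiOn_log_mul_add_sub_log_mul_add hP hN1 hN13 hx.1 hy.1 hxy
    simp only [g] at this ⊢
    linarith
  have hR : R₁ ∈ Ioo (g 1) (g 0) := by
    have hg0 := hC 0 le_rfl
    simp only [sub_zero, one_mul, zero_mul, zero_add] at hg0
    have hg1 : g 1 = 0 := by
      simp only [g, one_mul]
      ring
    rw [hg1, ← hg0]
    exact ⟨hR0, hR1⟩
  refine (existsUnique_congr fun α => and_congr_right fun hα => ?_).mpr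
    (existsUnique_mem_Ioo_eq_of_strictAntiOn zero_le_one hcont hanti hR)
  rw [hC α hα.1.le]
end

section
/- Let P > 0 and 0 < N_1 ≤ N_2 ≤ N_3 be reals, and let R_1, R_2, R_3 ≥ 0. Suppose there exists α ∈ [0,1] with R_1 ≤ C(P/N_1), R_2 ≤ C(αP/N_2), and R_3 ≤ C((1−α)P/(αP+N_3)), and there exists γ ∈ [0,1] with R_1 + R_3 ≤ C(γP/N_1), R_2 ≤ C((1−γ)P/(γP+N_2)), and R_3 ≤ C(γP/N_2). Then R_3 ≤ C(P/N_3), R_2 + R_3 ≤ C(P/N_2), and R_1 + R_2 + R_3 ≤ C(P/N_1). -/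
/-!
Superposition coding splits the power: `C(γP/N) + C((1-γ)P/(γP+N)) = C(P/N)`, since the
arguments of the logarithms multiply to `1 + P/N`. Adding the `γ`-constraints therefore gives
the two sum-rate bounds (at noise `N₁`, after lowering the interference-plus-noise `γP + N₂` to
`γP + N₁`), and the `α`-constraint on `R₃` alone gives `R₃ ≤ C(P/N₃)` because `C` is increasing.
-/

lemma C_le_C {a b : ℝ} (ha : -1 < a) (hab : a ≤ b) : C a ≤ C b := by
  unfold C
  gcongr
  linarith

lemma C_div_add_C_div_add {x y N : ℝ} (hN : N ≠ 0) (hxN : x + N ≠ 0) (hxyN : x + y + N ≠ 0) :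
    C (x / N) + C (y / (x + N)) = C ((x + y) / N) := by
  have hfactor₁ : 1 + x / N = (x + N) / N := by field_simp; ring
  have hfactor₂ : 1 + y / (x + N) = (x + y + N) / (x + N) := by field_simp; ring
  have hproduct : (1 + x / N) * (1 + y / (x + N)) = 1 + (x + y) / N := by
    rw [hfactor₁, hfactor₂]
    field_simp
    ring
  unfold C
  rw [← mul_add, ← Real.log_mul (by rw [hfactor₁]; exact div_ne_zero hxN hN)
    (by rw [hfactor₂]; exact div_ne_zero hxyN hxN), hproduct]

lemma C_split_power {P N γ : ℝ} (hP : 0 ≤ P) (hN : 0 < N) (hγ₀ : 0 ≤ γ) :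
    C (γ * P / N) + C ((1 - γ) * P / (γ * P + N)) = C (P / N) := by
  have hγP : 0 ≤ γ * P := mul_nonneg hγ₀ hP
  rw [C_div_add_C_div_add hN.ne' (by positivity) (by nlinarith)]
  ring_nf

theorem group4_outer_tighter_general (P N₁ N₂ N₃ R₁ R₂ R₃ : ℝ)
    (hP : 0 < P) (hN1 : 0 < N₁) (hN12 : N₁ ≤ N₂) (hN23 : N₂ ≤ N₃)
    (hα : ∃ α : ℝ, 0 ≤ α ∧ α ≤ 1 ∧
      R₁ ≤ C (P / N₁) ∧ R₂ ≤ C (α * P / N₂) ∧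
      R₃ ≤ C ((1 - α) * P / (α * P + N₃)))
    (hγ : ∃ γ : ℝ, 0 ≤ γ ∧ γ ≤ 1 ∧
      R₁ + R₃ ≤ C (γ * P / N₁) ∧ R₂ ≤ C ((1 - γ) * P / (γ * P + N₂)) ∧
      R₃ ≤ C (γ * P / N₂)) :
    R₃ ≤ C (P / N₃) ∧ R₂ + R₃ ≤ C (P / N₂) ∧ R₁ + R₂ + R₃ ≤ C (P / N₁) := by
  obtain ⟨α, hα₀, hα₁, -, -, hR₃⟩ := hα
  obtain ⟨γ, hγ₀, hγ₁, hR₁₃, hR₂, hR₃'⟩ := hγ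
  have hN₂ : 0 < N₂ := hN1.trans_le hN12
  have hN₃ : 0 < N₃ := hN₂.trans_le hN23
  have hαP : 0 ≤ α * P := mul_nonneg hα₀ hP.le
  refine ⟨?_, ?_, ?_⟩
  · have hSINR : 0 ≤ (1 - α) * P / (α * P + N₃) := div_nonneg (mul_nonneg (by linarith) hP.le)
      (by positivity)
    exact hR₃.trans (C_le_C (by linarith) (div_le_div₀ hP.le (by nlinarith) hN₃ (by linarith)))
  · calc R₂ + R₃ ≤ C (γ * P / N₂) + C ((1 - γ) * P / (γ * P + N₂)) := by linarith
      _ = C (P / N₂) := C_split_power hP.le hN₂ hγ₀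
  · have hγ'P : 0 ≤ (1 - γ) * P := mul_nonneg (by linarith) hP.le
    have hSINR : 0 ≤ (1 - γ) * P / (γ * P + N₂) := by positivity
    have hinterference : C ((1 - γ) * P / (γ * P + N₂)) ≤ C ((1 - γ) * P / (γ * P + N₁)) :=
      C_le_C (by linarith) (div_le_div_of_nonneg_left hγ'P (by positivity) (by linarith))
    calc R₁ + R₂ + R₃ ≤ C (γ * P / N₁) + C ((1 - γ) * P / (γ * P + N₁)) := by linarith
      _ = C (P / N₁) := C_split_power hP.le hN1 hγ₀

/-- The proposed outer bound for `G₁₄ ∪ G₂₁` is contained in the best previously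
known outer bound. -/
theorem group4_outer_tighter (P N₁ N₂ N₃ R₁ R₂ R₃ : ℝ)
    (hP : 0 < P) (hN1 : 0 < N₁) (hN12 : N₁ ≤ N₂) (hN23 : N₂ ≤ N₃)
    (hR1 : 0 ≤ R₁) (hR2 : 0 ≤ R₂) (hR3 : 0 ≤ R₃)
    (hα : ∃ α : ℝ, 0 ≤ α ∧ α ≤ 1 ∧
      R₁ ≤ C (P / N₁) ∧ R₂ ≤ C (α * P / N₂) ∧
      R₃ ≤ C ((1 - α) * P / (α * P + N₃)))
    (hγ : ∃ γ : ℝ, 0 ≤ γ ∧ γ ≤ 1 ∧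
      R₁ + R₃ ≤ C (γ * P / N₁) ∧ R₂ ≤ C ((1 - γ) * P / (γ * P + N₂)) ∧
      R₃ ≤ C (γ * P / N₂)) :
    R₃ ≤ C (P / N₃) ∧ R₂ + R₃ ≤ C (P / N₂) ∧ R₁ + R₂ + R₃ ≤ C (P / N₁) :=
  group4_outer_tighter_general P N₁ N₂ N₃ R₁ R₂ R₃ hP hN1 hN12 hN23 hα hγ
end

section
/- Let P > 0 and 0 < N_1 ≤ N_2 ≤ N_3 be reals. Let γ* ∈ [0,1] and suppose R_1 = C(γ*P/N_1) − C(γ*P/N_3) and R_3 ≤ C(γ*P/N_3) with R_3 ≥ 0. If γ ∈ [0,1] satisfies R_1 + R_3 ≤ C(γP/N_1), then R_3 ≤ C(γP/N_3). -/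
lemma C_le_C_s8 {x y : ℝ} (hx : -1 < x) (hxy : x ≤ y) : C x ≤ C y := by
  unfold C
  gcongr
  linarith

lemma C_add_C {p q : ℝ} (hp : -1 < p) (hq : -1 < q) :
    C p + C q = (1 / 2) * Real.log ((1 + p) * (1 + q)) := by
  unfold C
  rw [Real.log_mul (by linarith) (by linarith)]
  ring

lemma C_div_sub_C_div_le_of_le {a b x y : ℝ} (ha : 0 < a) (hab : a ≤ b) (hx : 0 ≤ x)
    (hxy : x ≤ y) : C (x / a) - C (x / b) ≤ C (y / a) - C (y / b) := by
  have hb : 0 < b := ha.trans_le hab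
  have hy : 0 ≤ y := hx.trans hxy
  have hxa : 0 ≤ x / a := div_nonneg hx ha.le
  have hxb : 0 ≤ x / b := div_nonneg hx hb.le
  have hya : 0 ≤ y / a := div_nonneg hy ha.le
  have hyb : 0 ≤ y / b := div_nonneg hy hb.le
  have hprod : (1 + x / a) * (1 + y / b) ≤ (1 + y / a) * (1 + x / b) := by
    have hdiff : (1 + y / a) * (1 + x / b) - (1 + x / a) * (1 + y / b)
        = (y - x) * (1 / a - 1 / b) := by ring
    linarith [mul_nonneg (sub_nonneg.2 hxy) (sub_nonneg.2 (one_div_le_one_div_of_le ha hab))]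
  have hlog := Real.log_le_log (by positivity) hprod
  linarith [C_add_C (p := x / a) (q := y / b) (by linarith) (by linarith),
    C_add_C (p := y / a) (q := x / b) (by linarith) (by linarith)]

theorem group4_below_threshold_general (P N₁ N₂ N₃ R₁ R₃ γstar γ : ℝ)
    (hP : 0 < P) (hN1 : 0 < N₁) (hN12 : N₁ ≤ N₂) (hN23 : N₂ ≤ N₃)
    (hγs0 : 0 ≤ γstar)
    (hR1 : R₁ = C (γstar * P / N₁) - C (γstar * P / N₃))
    (hR3thr : R₃ ≤ C (γstar * P / N₃))
    (hγ0 : 0 ≤ γ) (hsum : R₁ + R₃ ≤ C (γ * P / N₁)) :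
    R₃ ≤ C (γ * P / N₃) := by
  have hN3 : 0 < N₃ := hN1.trans_le (hN12.trans hN23)
  rcases le_total γstar γ with hle | hge
  · have hpos : 0 ≤ γstar * P / N₃ := by positivity
    exact hR3thr.trans (C_le_C_s8 (by linarith) (by gcongr))
  · have hgap := C_div_sub_C_div_le_of_le hN1 (hN12.trans hN23)
      (by positivity : 0 ≤ γ * P) (by gcongr : γ * P ≤ γstar * P)
    linarith

/-- Below the threshold `R_thr3 = C(γ*P/N₃)`, any point of outer bound 2 also
satisfies (weakly) the extra inner-bound condition `R₃ ≤ C(γP/N₃)` with the same `γ`. -/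
theorem group4_below_threshold (P N₁ N₂ N₃ R₁ R₃ γstar γ : ℝ)
    (hP : 0 < P) (hN1 : 0 < N₁) (hN12 : N₁ ≤ N₂) (hN23 : N₂ ≤ N₃)
    (hγs0 : 0 ≤ γstar) (hγs1 : γstar ≤ 1)
    (hR1 : R₁ = C (γstar * P / N₁) - C (γstar * P / N₃))
    (hR3thr : R₃ ≤ C (γstar * P / N₃)) (hR3 : 0 ≤ R₃)
    (hγ0 : 0 ≤ γ) (hγ1 : γ ≤ 1) (hsum : R₁ + R₃ ≤ C (γ * P / N₁)) :
    R₃ ≤ C (γ * P / N₃) :=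
  group4_below_threshold_general P N₁ N₂ N₃ R₁ R₃ γstar γ hP hN1 hN12 hN23 hγs0 hR1 hR3thr hγ0 hsum
end

section
/- Let P > 0 and 0 < N_1 ≤ N_3 be reals. Let α* ∈ [0,1] and suppose R_1 = C((1−α*)P/(α*P+N_1)) − C((1−α*)P/(α*P+N_3)). If α ∈ [0,1] and R_3 satisfies C((1−α*)P/(α*P+N_3)) ≤ R_3 ≤ C((1−α)P/(αP+N_3)), then R_1 + R_3 ≤ C((1−α)P/(αP+N_1)). -/
lemma C_eq_half_log_sub_log {a P N : ℝ} (h : a * P + N ≠ 0) (h' : P + N ≠ 0) :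
    C ((1 - a) * P / (a * P + N)) = (1 / 2) * (Real.log (P + N) - Real.log (a * P + N)) := by
  have hsnr : 1 + (1 - a) * P / (a * P + N) = (P + N) / (a * P + N) := by
    field_simp
    ring
  rw [C, hsnr, Real.log_div h' h]

lemma Real.log_add_sub_log_add_le_of_le {x y N₁ N₃ : ℝ} (hx : 0 < x + N₁) (hxy : x ≤ y)
    (hN : N₁ ≤ N₃) :
    Real.log (y + N₃) - Real.log (y + N₁) ≤ Real.log (x + N₃) - Real.log (x + N₁) := by
  have hprod : (x + N₁) * (y + N₃) ≤ (y + N₁) * (x + N₃) := by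
    nlinarith [mul_nonneg (sub_nonneg.mpr hxy) (sub_nonneg.mpr hN)]
  have hlog := Real.log_le_log (by nlinarith) hprod
  rw [Real.log_mul (by linarith) (by linarith), Real.log_mul (by linarith) (by linarith)] at hlog
  linarith

theorem group4_above_threshold_general (P N₁ N₃ R₁ R₃ αstar α : ℝ)
    (hP : 0 < P) (hN1 : 0 < N₁) (hN13 : N₁ ≤ N₃)
    (hαs0 : 0 ≤ αstar)
    (hR1 : R₁ = C ((1 - αstar) * P / (αstar * P + N₁))
              - C ((1 - αstar) * P / (αstar * P + N₃)))
    (hα0 : 0 ≤ α)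
    (hR3lo : C ((1 - αstar) * P / (αstar * P + N₃)) ≤ R₃)
    (hR3hi : R₃ ≤ C ((1 - α) * P / (α * P + N₃))) :
    R₁ + R₃ ≤ C ((1 - α) * P / (α * P + N₁)) := by
  have hN3 : 0 < N₃ := hN1.trans_le hN13
  have hC : ∀ {a N : ℝ}, 0 ≤ a → 0 < N →
      C ((1 - a) * P / (a * P + N)) = (1 / 2) * (Real.log (P + N) - Real.log (a * P + N)) :=
    fun ha hN ↦ C_eq_half_log_sub_log (by positivity) (by positivity)
  rw [hC hαs0 hN1, hC hαs0 hN3] at hR1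
  rw [hC hαs0 hN3] at hR3lo
  rw [hC hα0 hN3] at hR3hi
  rw [hC hα0 hN1]
  have hαP : α * P ≤ αstar * P := by
    have hlog : Real.log (α * P + N₃) ≤ Real.log (αstar * P + N₃) := by linarith
    linarith [(Real.log_le_log_iff (by positivity) (by positivity)).mp hlog]
  have hkey := Real.log_add_sub_log_add_le_of_le (by positivity) hαP hN13
  linarith

/-- Above the threshold `R'_thr3 = C((1−α*)P/(α*P+N₃))`, any point of outer bound 1
also satisfies (weakly) the extra inner-bound condition with the same `α`. -/
theorem group4_above_threshold (P N₁ N₃ R₁ R₃ αstar α : ℝ)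
    (hP : 0 < P) (hN1 : 0 < N₁) (hN13 : N₁ ≤ N₃)
    (hαs0 : 0 ≤ αstar) (hαs1 : αstar ≤ 1)
    (hR1 : R₁ = C ((1 - αstar) * P / (αstar * P + N₁))
              - C ((1 - αstar) * P / (αstar * P + N₃)))
    (hα0 : 0 ≤ α) (hα1 : α ≤ 1)
    (hR3lo : C ((1 - αstar) * P / (αstar * P + N₃)) ≤ R₃)
    (hR3hi : R₃ ≤ C ((1 - α) * P / (α * P + N₃))) :
    R₁ + R₃ ≤ C ((1 - α) * P / (α * P + N₁)) :=
  group4_above_threshold_general P N₁ N₃ R₁ R₃ αstar α hP hN1 hN13 hαs0 hR1 hα0 hR3lo hR3hi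
end

section
/- Let P > 0 and 0 < N_1 ≤ N_3 be reals. Suppose R_1 ≥ C(P/N_1) − C(P/N_3) and R_3 ≥ 0. If γ ∈ [0,1] satisfies R_1 + R_3 ≤ C(γP/N_1), then R_3 ≤ C(γP/N_3). -/
/-! The rate loss `C x − C (γ x)` from scaling the SNR by `γ ≤ 1` grows with the SNR `x`,
because `(1 + γ x) / (1 + x)` decreases in `x`. Receiver 1 sees SNR `P/N₁ ≥ P/N₃`, so
`R₃ ≤ C(γP/N₁) − R₁ ≤ C(γP/N₁) − C(P/N₁) + C(P/N₃) ≤ C(γP/N₃)`. -/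

theorem C_sub_C_mul_le {γ x y : ℝ} (hγ0 : 0 ≤ γ) (hγ1 : γ ≤ 1) (hy : 0 ≤ y) (hyx : y ≤ x) :
    C y - C (γ * y) ≤ C x - C (γ * x) := by
  have hx : 0 ≤ x := hy.trans hyx
  have hcross : (1 + y) * (1 + γ * x) ≤ (1 + x) * (1 + γ * y) := by
    nlinarith [mul_nonneg (sub_nonneg.2 hγ1) (sub_nonneg.2 hyx)]
  have hlog : Real.log (1 + y) + Real.log (1 + γ * x) ≤ Real.log (1 + x) + Real.log (1 + γ * y) := by
    rw [← Real.log_mul (by positivity) (by positivity), ← Real.log_mul (by positivity) (by positivity)]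
    exact Real.log_le_log (by positivity) hcross
  simp only [C]
  linarith

theorem group4_high_R1_general (P N₁ N₃ R₁ R₃ γ : ℝ)
    (hP : 0 < P) (hN1 : 0 < N₁) (hN13 : N₁ ≤ N₃)
    (hR1 : C (P / N₁) - C (P / N₃) ≤ R₁)
    (hγ0 : 0 ≤ γ) (hγ1 : γ ≤ 1) (hsum : R₁ + R₃ ≤ C (γ * P / N₁)) :
    R₃ ≤ C (γ * P / N₃) := by
  have hSNR : P / N₃ ≤ P / N₁ := div_le_div_of_nonneg_left hP.le hN1 hN13
  have hloss := C_sub_C_mul_le hγ0 hγ1 (div_nonneg hP.le (hN1.le.trans hN13)) hSNR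
  rw [mul_div_assoc] at hsum ⊢
  linarith

/-- In the regime `R₁ ≥ C(P/N₁) − C(P/N₃)`, the outer-bound-2 constraint
`R₁ + R₃ ≤ C(γP/N₁)` forces `R₃ ≤ C(γP/N₃)` with the same `γ`. -/
theorem group4_high_R1 (P N₁ N₃ R₁ R₃ γ : ℝ)
    (hP : 0 < P) (hN1 : 0 < N₁) (hN13 : N₁ ≤ N₃)
    (hR1 : C (P / N₁) - C (P / N₃) ≤ R₁) (hR3 : 0 ≤ R₃)
    (hγ0 : 0 ≤ γ) (hγ1 : γ ≤ 1) (hsum : R₁ + R₃ ≤ C (γ * P / N₁)) :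
    R₃ ≤ C (γ * P / N₃) :=
  group4_high_R1_general P N₁ N₃ R₁ R₃ γ hP hN1 hN13 hR1 hγ0 hγ1 hsum
end

section
/- Let P > 0 and 0 < N_1 ≤ N_2 ≤ N_3 be reals. Then the set A = {(R_2, R_3) ∈ ℝ² : R_2 ≥ 0, R_3 ≥ 0, and there exists α ∈ [0,1] with R_3 ≤ C((1−α)P/(αP+N_1)), R_2 ≤ C(αP/N_2), and R_3 ≤ C((1−α)P/(αP+N_3))} is equal to the set B = {(R_2, R_3) ∈ ℝ² : R_2 ≥ 0, R_3 ≥ 0, and there exists α ∈ [0,1] with R_2 ≤ C(αP/N_2) and R_3 ≤ C((1−α)P/(αP+N_3))}. -/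
lemma C_le_C_s11 {q q' : ℝ} (hq : -1 < q) (h : q ≤ q') : C q ≤ C q' := by
  unfold C
  gcongr
  linarith

lemma C_div_le_C_div {S D D' : ℝ} (hS : 0 ≤ S) (hD : 0 < D) (hDD' : D ≤ D') :
    C (S / D') ≤ C (S / D) :=
  C_le_C_s11 (by have := div_nonneg hS (hD.trans_le hDD').le; linarith)
    (div_le_div_of_nonneg_left hS hD hDD')

/-- At `R₁ = 0`, the slice of inner bound 1 equals the slice of outer bound 1:
the constraint `R₃ ≤ C((1−α)P/(αP+N₁))` is redundant since `N₁ ≤ N₃`. -/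
theorem group4_R1_zero_slices_eq (P N₁ N₂ N₃ : ℝ)
    (hP : 0 < P) (hN1 : 0 < N₁) (hN12 : N₁ ≤ N₂) (hN23 : N₂ ≤ N₃) :
    {p : ℝ × ℝ | 0 ≤ p.1 ∧ 0 ≤ p.2 ∧ ∃ α : ℝ, 0 ≤ α ∧ α ≤ 1 ∧
        p.2 ≤ C ((1 - α) * P / (α * P + N₁)) ∧
        p.1 ≤ C (α * P / N₂) ∧
        p.2 ≤ C ((1 - α) * P / (α * P + N₃))} =
    {p : ℝ × ℝ | 0 ≤ p.1 ∧ 0 ≤ p.2 ∧ ∃ α : ℝ, 0 ≤ α ∧ α ≤ 1 ∧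
        p.1 ≤ C (α * P / N₂) ∧
        p.2 ≤ C ((1 - α) * P / (α * P + N₃))} := by
  ext p
  constructor
  · rintro ⟨h1, h2, α, hα0, hα1, -, hR2, hR3⟩
    exact ⟨h1, h2, α, hα0, hα1, hR2, hR3⟩
  · rintro ⟨h1, h2, α, hα0, hα1, hR2, hR3⟩
    have hsignal : 0 ≤ (1 - α) * P := mul_nonneg (by linarith) hP.le
    have hnoise : 0 < α * P + N₁ := by positivity
    exact ⟨h1, h2, α, hα0, hα1,
      hR3.trans (C_div_le_C_div hsignal hnoise (by linarith)), hR2, hR3⟩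
end

section
/- Let P > 0 and 0 < N_1 < N_2 be reals. Then there exist reals R_1 > 0 and R_2 > 0 with R_1 + R_2 = C(P/N_1) such that for every α ∈ [0,1], it is not the case that both R_1 ≤ C(αP/N_1) and R_2 ≤ C((1−α)P/(αP+N_2)). -/
open Set

lemma C_strictMonoOn : StrictMonoOn C (Ioi (-1)) := by
  intro a ha b _ hab
  have := Real.log_lt_log (show 0 < 1 + a by linarith [mem_Ioi.mp ha]) (by linarith : 1 + a < 1 + b)
  unfold C
  linarith

lemma C_lt_C {a b : ℝ} (ha : -1 < a) (hab : a < b) : C a < C b :=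
  C_strictMonoOn ha (ha.trans hab) hab

lemma C_le_C_iff {a b : ℝ} (ha : -1 < a) (hb : -1 < b) : C a ≤ C b ↔ a ≤ b :=
  C_strictMonoOn.le_iff_le ha hb

lemma C_pos {q : ℝ} (hq : 0 < q) : 0 < C q := by
  simpa [C] using C_lt_C (by norm_num) hq

lemma C_div_add_C_div {N s t : ℝ} (hN : 0 < N) (hs : 0 ≤ s) (ht : 0 ≤ t) :
    C (s / N) + C (t / (s + N)) = C ((s + t) / N) := by
  have hsN : 0 < s + N := by linarith
  have hprod : (1 + s / N) * (1 + t / (s + N)) = 1 + (s + t) / N := by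
    field_simp
    ring
  unfold C
  rw [← hprod, Real.log_mul (by positivity) (by positivity)]
  ring

lemma corner_rate_gt_of_C_le {P N₁ N₂ s α : ℝ} (hN₁ : 0 < N₁) (hN₁₂ : N₁ < N₂) (hs : 0 ≤ s)
    (hsP : s < P) (hα₀ : 0 ≤ α) (hα₁ : α ≤ 1) (h : C (s / N₁) ≤ C (α * P / N₁)) :
    C ((1 - α) * P / (α * P + N₂)) < C ((P - s) / (s + N₁)) := by
  have hP : 0 < P := by linarith
  have hN₂ : 0 < N₂ := hN₁.trans hN₁₂
  have hsαP : s ≤ α * P := by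
    have := (C_le_C_iff (by linarith [div_nonneg hs hN₁.le])
      (by linarith [show 0 ≤ α * P / N₁ by positivity])).mp h
    exact (div_le_div_iff_of_pos_right hN₁).mp this
  have hpow : 0 ≤ (1 - α) * P / (α * P + N₂) :=
    div_nonneg (mul_nonneg (by linarith) hP.le) (by positivity)
  apply C_lt_C (by linarith)
  calc (1 - α) * P / (α * P + N₂) ≤ (P - s) / (s + N₂) :=
        div_le_div₀ (by linarith) (by linarith) (by linarith) (by linarith)
    _ < (P - s) / (s + N₁) := div_lt_div_of_pos_left (by linarith) (by linarith) (by linarith)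

/-- The curved outer-bound region is strictly contained in the polyhedral region
`{(R₁,R₂) : R₁ + R₂ ≤ C(P/N₁)}`: some point on the boundary of the polyhedron is
excluded by every choice of `α ∈ [0,1]`. -/
theorem group7_outer_strictly_tighter (P N₁ N₂ : ℝ)
    (hP : 0 < P) (hN1 : 0 < N₁) (hN12 : N₁ < N₂) :
    ∃ R₁ R₂ : ℝ, 0 < R₁ ∧ 0 < R₂ ∧ R₁ + R₂ = C (P / N₁) ∧
      ∀ α : ℝ, 0 ≤ α → α ≤ 1 →
        ¬ (R₁ ≤ C (α * P / N₁) ∧ R₂ ≤ C ((1 - α) * P / (α * P + N₂))) := by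
  have hs : 0 < P / 2 := by positivity
  refine ⟨C (P / 2 / N₁), C ((P - P / 2) / (P / 2 + N₁)), C_pos (by positivity),
    C_pos (div_pos (by linarith) (by linarith)), ?_, ?_⟩
  · rw [C_div_add_C_div hN1 hs.le (by linarith)]
    congr 1
    ring
  · rintro α hα₀ hα₁ ⟨h₁, h₂⟩
    exact (corner_rate_gt_of_C_le hN1 hN12 hs.le (by linarith) hα₀ hα₁ h₁).not_ge h₂
end

section
/- Let P > 0 and N_1, N_2, N_3 > 0 be reals. Let W = {(R_1,R_2,R_3) ∈ ℝ³ : R_1,R_2,R_3 ≥ 0 and ∃α ∈ [0,1] with R_1 ≤ C(αP/N_1), R_2 ≤ C((1−α)P/(αP+N_2)), R_3 ≤ C(P/N_3)} and S = {(R_1,R_2,R_3) ∈ ℝ³ : R_1,R_2,R_3 ≥ 0 and ∃α ∈ [0,1] with R_1 < C(αP/N_1), R_2 < C((1−α)P/(αP+N_2)), R_3 < C(P/N_3)}. Then W equals the closure of S in ℝ³. -/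
/-!
Both regions are unions over `α ∈ [0, 1]` of boxes whose far corner is the triple of rate bounds
at `α`: closed boxes for `W`, half-open ones for `S`. Scaling the box at `α` by `t ∈ [0, 1]³`
parametrizes `W` continuously by the compact set `[0, 1] × [0, 1]³`, so `W` is closed and
contains `closure S`. Conversely `[0, 1] × [0, 1]³` is the closure of `(0, 1) × [0, 1)³`, whose
image lies in `S` because all three rates are positive for `0 < α < 1`; by continuity
`W ⊆ closure S`.
-/

open Set

lemma Icc_zero_eq_image_mul {b : ℝ} (hb : 0 ≤ b) : Icc 0 b = (· * b) '' Icc 0 1 := by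
  rw [image_mul_right_Icc zero_le_one hb, zero_mul, one_mul]

lemma mul_mem_Ico_zero {t b : ℝ} (ht : t ∈ Ico 0 1) (hb : 0 < b) : t * b ∈ Ico 0 b :=
  ⟨mul_nonneg ht.1 hb.le, mul_lt_of_lt_one_left hb ht.2⟩

section Boxes

variable {A : Type*} {K s : Set A} {f g h : A → ℝ}

def iccBoxes (K : Set A) (f g h : A → ℝ) : Set (ℝ × ℝ × ℝ) :=
  ⋃ a ∈ K, Icc 0 (f a) ×ˢ Icc 0 (g a) ×ˢ Icc 0 (h a)

def icoBoxes (K : Set A) (f g h : A → ℝ) : Set (ℝ × ℝ × ℝ) :=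
  ⋃ a ∈ K, Ico 0 (f a) ×ˢ Ico 0 (g a) ×ˢ Ico 0 (h a)

lemma mem_iccBoxes {r : ℝ × ℝ × ℝ} : r ∈ iccBoxes K f g h ↔
    0 ≤ r.1 ∧ 0 ≤ r.2.1 ∧ 0 ≤ r.2.2 ∧ ∃ a ∈ K, r.1 ≤ f a ∧ r.2.1 ≤ g a ∧ r.2.2 ≤ h a := by
  simp only [iccBoxes, mem_iUnion₂, mem_prod, mem_Icc, exists_prop]
  aesop

lemma mem_icoBoxes {r : ℝ × ℝ × ℝ} : r ∈ icoBoxes K f g h ↔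
    0 ≤ r.1 ∧ 0 ≤ r.2.1 ∧ 0 ≤ r.2.2 ∧ ∃ a ∈ K, r.1 < f a ∧ r.2.1 < g a ∧ r.2.2 < h a := by
  simp only [icoBoxes, mem_iUnion₂, mem_prod, mem_Ico, exists_prop]
  aesop

lemma icoBoxes_subset_iccBoxes : icoBoxes K f g h ⊆ iccBoxes K f g h :=
  iUnion₂_mono fun _ _ =>
    prod_mono Ico_subset_Icc_self (prod_mono Ico_subset_Icc_self Ico_subset_Icc_self)

def boxScale (f g h : A → ℝ) (p : A × ℝ × ℝ × ℝ) : ℝ × ℝ × ℝ :=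
  (p.2.1 * f p.1, p.2.2.1 * g p.1, p.2.2.2 * h p.1)

lemma iccBoxes_eq_image (hf : ∀ a ∈ K, 0 ≤ f a) (hg : ∀ a ∈ K, 0 ≤ g a) (hh : ∀ a ∈ K, 0 ≤ h a) :
    iccBoxes K f g h = boxScale f g h '' (K ×ˢ Icc 0 1 ×ˢ Icc 0 1 ×ˢ Icc 0 1) := by
  change _ = Function.uncurry (fun a t => boxScale f g h (a, t)) '' _
  rw [image_uncurry_prod, ← iUnion_image_left]
  refine iUnion₂_congr fun a ha => ?_
  rw [Icc_zero_eq_image_mul (hf a ha), Icc_zero_eq_image_mul (hg a ha),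
    Icc_zero_eq_image_mul (hh a ha), prod_image_image_eq, prod_image_image_eq]
  rfl

lemma boxScale_image_subset_icoBoxes (hsK : s ⊆ K)
    (hpos : ∀ a ∈ s, 0 < f a ∧ 0 < g a ∧ 0 < h a) :
    boxScale f g h '' (s ×ˢ Ico 0 1 ×ˢ Ico 0 1 ×ˢ Ico 0 1) ⊆ icoBoxes K f g h := by
  rintro _ ⟨⟨a, t⟩, ⟨ha, ht₁, ht₂, ht₃⟩, rfl⟩
  obtain ⟨hfa, hga, hha⟩ := hpos a ha
  exact mem_biUnion (hsK ha)
    ⟨mul_mem_Ico_zero ht₁ hfa, mul_mem_Ico_zero ht₂ hga, mul_mem_Ico_zero ht₃ hha⟩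

variable [TopologicalSpace A]

lemma continuousOn_boxScale (hf : ContinuousOn f K) (hg : ContinuousOn g K)
    (hh : ContinuousOn h K) (T : Set (ℝ × ℝ × ℝ)) : ContinuousOn (boxScale f g h) (K ×ˢ T) := by
  have hf' := hf.comp continuousOn_fst (mapsTo_fst_prod (t := T))
  have hg' := hg.comp continuousOn_fst (mapsTo_fst_prod (t := T))
  have hh' := hh.comp continuousOn_fst (mapsTo_fst_prod (t := T))
  exact (continuous_snd.fst.continuousOn.mul hf').prodMk
    ((continuous_snd.snd.fst.continuousOn.mul hg').prodMk
      (continuous_snd.snd.snd.continuousOn.mul hh'))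

lemma isClosed_iccBoxes (hK : IsCompact K) (hf : ContinuousOn f K) (hg : ContinuousOn g K)
    (hh : ContinuousOn h K) (hf₀ : ∀ a ∈ K, 0 ≤ f a) (hg₀ : ∀ a ∈ K, 0 ≤ g a)
    (hh₀ : ∀ a ∈ K, 0 ≤ h a) : IsClosed (iccBoxes K f g h) := by
  rw [iccBoxes_eq_image hf₀ hg₀ hh₀]
  exact ((hK.prod (isCompact_Icc.prod (isCompact_Icc.prod isCompact_Icc))).image_of_continuousOn
    (continuousOn_boxScale hf hg hh _)).isClosed

lemma closure_icoBoxes (hs : IsCompact (closure s)) (hf : ContinuousOn f (closure s))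
    (hg : ContinuousOn g (closure s)) (hh : ContinuousOn h (closure s))
    (hpos : ∀ a ∈ s, 0 < f a ∧ 0 < g a ∧ 0 < h a) :
    closure (icoBoxes (closure s) f g h) = iccBoxes (closure s) f g h := by
  have hf₀ := le_on_closure (fun a ha => (hpos a ha).1.le) continuousOn_const hf
  have hg₀ := le_on_closure (fun a ha => (hpos a ha).2.1.le) continuousOn_const hg
  have hh₀ := le_on_closure (fun a ha => (hpos a ha).2.2.le) continuousOn_const hh
  refine subset_antisymm
    (closure_minimal icoBoxes_subset_iccBoxes (isClosed_iccBoxes hs hf hg hh hf₀ hg₀ hh₀)) ?_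
  calc iccBoxes (closure s) f g h
      = boxScale f g h '' closure (s ×ˢ Ico 0 1 ×ˢ Ico 0 1 ×ˢ Ico 0 1) := by
        rw [iccBoxes_eq_image hf₀ hg₀ hh₀, closure_prod_eq, closure_prod_eq, closure_prod_eq,
          closure_Ico zero_ne_one]
    _ ⊆ closure (boxScale f g h '' (s ×ˢ Ico 0 1 ×ˢ Ico 0 1 ×ˢ Ico 0 1)) :=
        ContinuousOn.image_closure (by
          rw [closure_prod_eq]; exact continuousOn_boxScale hf hg hh _)
    _ ⊆ closure (icoBoxes (closure s) f g h) :=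
        closure_mono (boxScale_image_subset_icoBoxes subset_closure hpos)

end Boxes

lemma ContinuousOn.C_comp {A : Type*} [TopologicalSpace A] {K : Set A} {u : A → ℝ}
    (hu : ContinuousOn u K) (hu₀ : ∀ a ∈ K, 0 ≤ u a) : ContinuousOn (fun a => C (u a)) K :=
  continuousOn_const.mul (hu.const_add 1 |>.log fun a ha => by linarith [hu₀ a ha])

/-- For the members `G₁₇ ∪ G₂₇` and `G₁₇ ∪ G₂₈` of group 7, the proposed outer bound
`W` equals the closure of the proposed inner bound `S`, establishing the capacity. -/
theorem group7_capacity_27_28 (P N₁ N₂ N₃ : ℝ)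
    (hP : 0 < P) (hN1 : 0 < N₁) (hN2 : 0 < N₂) (hN3 : 0 < N₃) :
    {r : ℝ × ℝ × ℝ | 0 ≤ r.1 ∧ 0 ≤ r.2.1 ∧ 0 ≤ r.2.2 ∧ ∃ α : ℝ, 0 ≤ α ∧ α ≤ 1 ∧
        r.1 ≤ C (α * P / N₁) ∧ r.2.1 ≤ C ((1 - α) * P / (α * P + N₂)) ∧
        r.2.2 ≤ C (P / N₃)} =
    closure {r : ℝ × ℝ × ℝ | 0 ≤ r.1 ∧ 0 ≤ r.2.1 ∧ 0 ≤ r.2.2 ∧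
        ∃ α : ℝ, 0 ≤ α ∧ α ≤ 1 ∧
        r.1 < C (α * P / N₁) ∧ r.2.1 < C ((1 - α) * P / (α * P + N₂)) ∧
        r.2.2 < C (P / N₃)} := by
  have hs : closure (Ioo (0 : ℝ) 1) = Icc 0 1 := closure_Ioo zero_ne_one
  have hcont₁ : ContinuousOn (fun α => C (α * P / N₁)) (Icc 0 1) :=
    ContinuousOn.C_comp (by fun_prop) fun α ⟨h₀, _⟩ => by positivity
  have hcont₂ : ContinuousOn (fun α => C ((1 - α) * P / (α * P + N₂))) (Icc 0 1) := by
    refine ContinuousOn.C_comp (.div (by fun_prop) (by fun_prop) fun α hα => ?_)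
      fun α ⟨h₀, h₁⟩ => ?_
    · have := hα.1; positivity
    · have := sub_nonneg.2 h₁; positivity
  have hpos : ∀ α ∈ Ioo (0 : ℝ) 1,
      0 < C (α * P / N₁) ∧ 0 < C ((1 - α) * P / (α * P + N₂)) ∧ 0 < C (P / N₃) :=
    fun α ⟨h₀, h₁⟩ => ⟨C_pos (by positivity),
      C_pos (by have := sub_pos.2 h₁; positivity), C_pos (by positivity)⟩
  have hclosure := closure_icoBoxes (s := Ioo (0 : ℝ) 1) (hs ▸ isCompact_Icc) (hs ▸ hcont₁)
    (hs ▸ hcont₂) continuousOn_const hpos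
  rw [hs] at hclosure
  convert hclosure.symm using 2 <;> ext r <;> simp [mem_iccBoxes, mem_icoBoxes, and_assoc]
end
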